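/- Let (X, 𝓑) be a primitive uniform space, let Y ⊆ X be nonempty, and let f : X → X be a mapping with f(Y) ⊆ Y. Write Z := c_𝓑(f, Y). If f(Y ∩ B(x)) ⊆ B(f(x)) holds for every x ∈ Z and every B ∈ 𝓑, then f maps Z into Z, i.e. f(Z) ⊆ Z. -/

import Mathlib

/-!
An entourage `B` that absorbs some iterate `fⁿ(Y)` around `x` absorbs `fⁿ⁺¹(Y)` around `f x`:
`fⁿ(Y)` lies in `Y ∩ B(x)`, which `f` maps into `B(f x)`. So the entourages absorbing an iterate
around `f x` include those around `x`, whose intersection is already the smallest possible one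
when `x` is central.
-/

/-- For an entourage `B ⊆ X × X` and `x : X`, `entBall B x = {y | (x, y) ∈ B}`. -/
def entBall {X : Type*} (B : Set (X × X)) (x : X) : Set X := {y | (x, y) ∈ B}

/-- The centre `c_𝓑(f, Y)` of a mapping `f : X → X` on `Y ⊆ X`. -/
def centreMap {X : Type*} (𝓑 : Set (Set (X × X))) (f : X → X) (Y : Set X) : Set X :=
  {x | ⋂₀ {B ∈ 𝓑 | ∃ n : ℕ, ∃ z : X, f^[n] '' Y ⊆ entBall B z} =
       ⋂₀ {B ∈ 𝓑 | ∃ n : ℕ, f^[n] '' Y ⊆ entBall B x}}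

open Set Function

theorem image_iterate_succ_subset_entBall {X : Type*} {f : X → X} {Y : Set X}
    {B : Set (X × X)} {x : X} {n : ℕ} (hfY : MapsTo f Y Y)
    (hfB : f '' (Y ∩ entBall B x) ⊆ entBall B (f x)) (hn : f^[n] '' Y ⊆ entBall B x) :
    f^[n + 1] '' Y ⊆ entBall B (f x) := by
  rw [iterate_succ', image_comp]
  exact (image_mono (subset_inter (hfY.iterate n).image_subset hn)).trans hfB

theorem apply_mem_centreMap {X : Type*} {𝓑 : Set (Set (X × X))} {f : X → X} {Y : Set X}
    {x : X} (hfY : MapsTo f Y Y) (hx : x ∈ centreMap 𝓑 f Y)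
    (hfB : ∀ B ∈ 𝓑, f '' (Y ∩ entBall B x) ⊆ entBall B (f x)) :
    f x ∈ centreMap 𝓑 f Y := by
  refine Subset.antisymm (sInter_subset_sInter fun B ⟨hB, n, hn⟩ => ⟨hB, n, f x, hn⟩) ?_
  refine (sInter_subset_sInter ?_).trans (Eq.subset hx.symm)
  exact fun B ⟨hB, n, hn⟩ => ⟨hB, n + 1, image_iterate_succ_subset_entBall hfY (hfB B hB) hn⟩

theorem stmt8_general {X : Type*} (𝓑 : Set (Set (X × X)))
    (f : X → X) (Y : Set X) (hfY : f '' Y ⊆ Y)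
    (hB : ∀ x ∈ centreMap 𝓑 f Y, ∀ B ∈ 𝓑,
      f '' (Y ∩ entBall B x) ⊆ entBall B (f x)) :
    f '' centreMap 𝓑 f Y ⊆ centreMap 𝓑 f Y := by
  rintro _ ⟨x, hx, rfl⟩
  exact apply_mem_centreMap (mapsTo_iff_image_subset.2 hfY) hx (hB x hx)

/-- first part of Lemma 13: in a primitive uniform space `(X, 𝓑)`, if
`Y ⊆ X` is nonempty, `f(Y) ⊆ Y`, and `f(Y ∩ B(x)) ⊆ B(f(x))` holds for every
`x ∈ Z := c_𝓑(f, Y)` and every `B ∈ 𝓑`, then `f(Z) ⊆ Z`. -/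
theorem stmt8 {X : Type*} [Nonempty X] (𝓑 : Set (Set (X × X)))
    (hUniv : (Set.univ : Set (X × X)) ∈ 𝓑)
    (f : X → X) (Y : Set X) (hY : Y.Nonempty) (hfY : f '' Y ⊆ Y)
    (hB : ∀ x ∈ centreMap 𝓑 f Y, ∀ B ∈ 𝓑,
      f '' (Y ∩ entBall B x) ⊆ entBall B (f x)) :
    f '' centreMap 𝓑 f Y ⊆ centreMap 𝓑 f Y :=
  stmt8_general 𝓑 f Y hfY hB
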